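/- arXiv:1707.04814 — 4 statements merged into one kernel-verified Lean document; each statement's English description precedes it below -/
import Mathlib

section
/- If h(z) is a polynomial of degree n with complex coefficients all of whose zeros lie in the closed unit disk |z| ≤ 1, then for any integer d ≥ n and any complex number λ with |λ| = 1, the polynomial P(z) = z^{d-n} h(z) + λ z^n \overline{h}(1/z) (where \overline{h} denotes the polynomial with conjugated coefficients, so z^n \overline{h}(1/z) is the conjugate-reciprocal of h) has all of its zeros on the unit circle |z| = 1, provided P is not identically zero. -/
/-!
Factor `h = a ∏ (X - r)` over its roots; then `h* := conjReciprocal n h = conj a ∏ (1 - conj r X)`,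
and the identity `‖z - r‖² - ‖1 - conj r z‖² = (‖z‖² - 1)(1 - ‖r‖²)` compares the two products
factor by factor. If some root lies strictly inside the disk, then `‖h z‖ < ‖h* z‖` for `‖z‖ < 1`
and `‖h* z‖ < ‖h z‖` for `‖z‖ > 1`, contradicting `‖z‖ ^ (d - n) ‖h z‖ = ‖h* z‖` at a zero of `P`
off the circle. If all roots lie on the circle, then `h* = μ h` with `‖μ‖ = 1`, so
`P = (X ^ (d - n) + λ μ) h`.
-/

open Polynomial Complex

/-- The conjugate-reciprocal of `h` relative to degree `n`:
`z ^ n * conj(h)(1/z) = ∑ conj (a_{n-j}) z ^ j`. -/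
noncomputable def conjReciprocal (n : ℕ) (h : Polynomial ℂ) : Polynomial ℂ :=
  Polynomial.reflect n (h.map (starRingEnd ℂ))

open ComplexConjugate

theorem Polynomial.reflect_prod_X_sub_C {R : Type*} [CommRing R] [Nontrivial R]
    (s : Multiset R) :
    reflect (Multiset.card s) (s.map (X - C ·)).prod = (s.map (1 - C · * X)).prod := by
  induction s using Multiset.induction with
  | empty => simp
  | cons a s ih =>
    rw [Multiset.card_cons, add_comm, Multiset.map_cons, Multiset.prod_cons,
      reflect_mul _ _ (natDegree_X_sub_C_le a) ((natDegree_multiset_prod_X_sub_C_eq_card s).le)]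
    simp [ih, reflect_sub, reflect_C]

theorem Multiset.prod_map_lt_prod_map_of_exists_lt {ι R : Type*} [CommSemiring R]
    [PartialOrder R] [IsStrictOrderedRing R] {s : Multiset ι} {f g : ι → R} (hf : ∀ i ∈ s, 0 ≤ f i)
    (hg : ∀ i ∈ s, 0 < g i) (hfg : ∀ i ∈ s, f i ≤ g i) (hlt : ∃ i ∈ s, f i < g i) :
    (s.map f).prod < (s.map g).prod := by
  classical
  obtain ⟨i, hi, hfgi⟩ := hlt
  rw [← Multiset.cons_erase hi, Multiset.map_cons, Multiset.map_cons, Multiset.prod_cons,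
    Multiset.prod_cons]
  have hmem : ∀ j ∈ s.erase i, j ∈ s := fun j hj => Multiset.mem_of_mem_erase hj
  calc f i * ((s.erase i).map f).prod ≤ f i * ((s.erase i).map g).prod :=
        mul_le_mul_of_nonneg_left (Multiset.prod_map_le_prod_map₀ f g
          (fun j hj => hf j (hmem j hj)) fun j hj => hfg j (hmem j hj)) (hf i hi)
    _ < g i * ((s.erase i).map g).prod :=
        mul_lt_mul_of_pos_right hfgi (Multiset.prod_pos fun x hx => by
          obtain ⟨j, hj, rfl⟩ := Multiset.mem_map.1 hx
          exact hg j (hmem j hj))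

namespace Complex

theorem norm_sub_sq_sub_norm_one_sub_conj_mul_sq (z r : ℂ) :
    ‖z - r‖ ^ 2 - ‖1 - conj r * z‖ ^ 2 = (‖z‖ ^ 2 - 1) * (1 - ‖r‖ ^ 2) := by
  simp only [Complex.sq_norm, normSq_apply, sub_re, sub_im, mul_re, mul_im, one_re, one_im,
    conj_re, conj_im]
  ring

variable {z r : ℂ}

theorem norm_one_sub_conj_mul_le_norm_sub (hz : 1 ≤ ‖z‖) (hr : ‖r‖ ≤ 1) :
    ‖1 - conj r * z‖ ≤ ‖z - r‖ := by
  rw [← sq_le_sq₀ (norm_nonneg _) (norm_nonneg _)]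
  nlinarith [norm_sub_sq_sub_norm_one_sub_conj_mul_sq z r, one_le_pow₀ (n := 2) hz,
    pow_le_one₀ (n := 2) (norm_nonneg r) hr]

theorem norm_one_sub_conj_mul_lt_norm_sub (hz : 1 < ‖z‖) (hr : ‖r‖ < 1) :
    ‖1 - conj r * z‖ < ‖z - r‖ := by
  rw [← sq_lt_sq₀ (norm_nonneg _) (norm_nonneg _)]
  nlinarith [norm_sub_sq_sub_norm_one_sub_conj_mul_sq z r, one_lt_pow₀ (n := 2) hz two_ne_zero,
    pow_lt_one₀ (n := 2) (norm_nonneg r) hr two_ne_zero]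

theorem norm_sub_le_norm_one_sub_conj_mul (hz : ‖z‖ ≤ 1) (hr : ‖r‖ ≤ 1) :
    ‖z - r‖ ≤ ‖1 - conj r * z‖ := by
  rw [← sq_le_sq₀ (norm_nonneg _) (norm_nonneg _)]
  nlinarith [norm_sub_sq_sub_norm_one_sub_conj_mul_sq z r,
    pow_le_one₀ (n := 2) (norm_nonneg z) hz, pow_le_one₀ (n := 2) (norm_nonneg r) hr]

theorem norm_sub_lt_norm_one_sub_conj_mul (hz : ‖z‖ < 1) (hr : ‖r‖ < 1) :
    ‖z - r‖ < ‖1 - conj r * z‖ := by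
  rw [← sq_lt_sq₀ (norm_nonneg _) (norm_nonneg _)]
  nlinarith [norm_sub_sq_sub_norm_one_sub_conj_mul_sq z r,
    pow_lt_one₀ (n := 2) (norm_nonneg z) hz two_ne_zero,
    pow_lt_one₀ (n := 2) (norm_nonneg r) hr two_ne_zero]

theorem norm_one_sub_conj_mul_pos (hz : ‖z‖ < 1) (hr : ‖r‖ ≤ 1) : 0 < ‖1 - conj r * z‖ := by
  have : ‖conj r * z‖ < 1 := by
    rw [norm_mul, RCLike.norm_conj]
    nlinarith [norm_nonneg r, norm_nonneg z]
  linarith [norm_sub_norm_le 1 (conj r * z), norm_one (α := ℂ)]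

end Complex

theorem norm_multiset_prod {α : Type*} [NormedField α] (s : Multiset α) :
    ‖s.prod‖ = (s.map (‖·‖)).prod :=
  map_multiset_prod (normHom : α →*₀ ℝ) s

theorem norm_eval_eq_prod (h : ℂ[X]) (z : ℂ) :
    ‖h.eval z‖ = ‖h.leadingCoeff‖ * (h.roots.map fun r => ‖z - r‖).prod := by
  rw [(IsAlgClosed.splits h).eval_eq_prod_roots, norm_mul, norm_multiset_prod, Multiset.map_map]
  rfl

section

variable {n : ℕ} {h : ℂ[X]}

theorem conjReciprocal_eq_C_mul_prod (hdeg : h.natDegree = n) :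
    conjReciprocal n h =
      C (conj h.leadingCoeff) * (h.roots.map fun r => 1 - C (conj r) * X).prod := by
  have hsplit : (h.map (starRingEnd ℂ)).Splits := IsAlgClosed.splits _
  have hcard : Multiset.card (h.map (starRingEnd ℂ)).roots = n := by
    rw [← hdeg, ← natDegree_map (starRingEnd ℂ)]; exact splits_iff_card_roots.1 hsplit
  rw [conjReciprocal, hsplit.eq_prod_roots, reflect_C_mul, ← hcard, reflect_prod_X_sub_C,
    (IsAlgClosed.splits h).roots_map, Multiset.map_map, leadingCoeff_map]
  rfl

theorem norm_eval_conjReciprocal_eq_prod (hdeg : h.natDegree = n) (z : ℂ) :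
    ‖(conjReciprocal n h).eval z‖ =
      ‖h.leadingCoeff‖ * (h.roots.map fun r => ‖1 - conj r * z‖).prod := by
  rw [conjReciprocal_eq_C_mul_prod hdeg, eval_mul, eval_C, eval_multiset_prod, norm_mul,
    RCLike.norm_conj, norm_multiset_prod, Multiset.map_map, Multiset.map_map]
  simp

theorem norm_eval_lt_norm_eval_conjReciprocal (hdeg : h.natDegree = n)
    (hroots : ∀ r ∈ h.roots, ‖r‖ ≤ 1) (hinside : ∃ r ∈ h.roots, ‖r‖ < 1) {z : ℂ}
    (hz : ‖z‖ < 1) : ‖h.eval z‖ < ‖(conjReciprocal n h).eval z‖ := by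
  obtain ⟨r₀, hr₀, hr₀_lt⟩ := hinside
  have hlead : 0 < ‖h.leadingCoeff‖ := by simpa using ne_zero_of_mem_roots hr₀
  rw [norm_eval_eq_prod, norm_eval_conjReciprocal_eq_prod hdeg]
  exact mul_lt_mul_of_pos_left (Multiset.prod_map_lt_prod_map_of_exists_lt
    (fun _ _ => norm_nonneg _) (fun r hr => norm_one_sub_conj_mul_pos hz (hroots r hr))
    (fun r hr => norm_sub_le_norm_one_sub_conj_mul hz.le (hroots r hr))
    ⟨r₀, hr₀, norm_sub_lt_norm_one_sub_conj_mul hz hr₀_lt⟩) hlead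

theorem norm_eval_conjReciprocal_lt_norm_eval (hdeg : h.natDegree = n)
    (hroots : ∀ r ∈ h.roots, ‖r‖ ≤ 1) (hinside : ∃ r ∈ h.roots, ‖r‖ < 1) {z : ℂ}
    (hz : 1 < ‖z‖) : ‖(conjReciprocal n h).eval z‖ < ‖h.eval z‖ := by
  obtain ⟨r₀, hr₀, hr₀_lt⟩ := hinside
  have hlead : 0 < ‖h.leadingCoeff‖ := by simpa using ne_zero_of_mem_roots hr₀
  rw [norm_eval_conjReciprocal_eq_prod hdeg, norm_eval_eq_prod h]
  exact mul_lt_mul_of_pos_left (Multiset.prod_map_lt_prod_map_of_exists_lt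
    (fun _ _ => norm_nonneg _)
    (fun r hr => norm_sub_pos_iff.2 fun hzr => by linarith [hroots r hr, hzr ▸ hz])
    (fun r hr => norm_one_sub_conj_mul_le_norm_sub hz.le (hroots r hr))
    ⟨r₀, hr₀, norm_one_sub_conj_mul_lt_norm_sub hz hr₀_lt⟩) hlead

theorem norm_eq_one_of_norm_pow_mul_norm_eval_eq (hdeg : h.natDegree = n)
    (hroots : ∀ r ∈ h.roots, ‖r‖ ≤ 1) (hinside : ∃ r ∈ h.roots, ‖r‖ < 1) {k : ℕ} {z : ℂ}
    (heq : ‖z‖ ^ k * ‖h.eval z‖ = ‖(conjReciprocal n h).eval z‖) : ‖z‖ = 1 := by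
  rcases lt_trichotomy ‖z‖ 1 with hz | hz | hz
  · have := norm_eval_lt_norm_eval_conjReciprocal hdeg hroots hinside hz
    nlinarith [pow_le_one₀ (n := k) (norm_nonneg z) hz.le, norm_nonneg (h.eval z)]
  · exact hz
  · have := norm_eval_conjReciprocal_lt_norm_eval hdeg hroots hinside hz
    nlinarith [one_le_pow₀ (n := k) hz.le, norm_nonneg (h.eval z)]

theorem exists_conjReciprocal_eq_C_mul_self (hdeg : h.natDegree = n) (hh : h ≠ 0)
    (hcirc : ∀ r ∈ h.roots, ‖r‖ = 1) : ∃ μ : ℂ, ‖μ‖ = 1 ∧ conjReciprocal n h = C μ * h := by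
  set a := h.leadingCoeff
  have ha : a ≠ 0 := leadingCoeff_ne_zero.2 hh
  refine ⟨conj a / a * (h.roots.map fun r => -conj r).prod, ?_, ?_⟩
  · rw [norm_mul, norm_div, RCLike.norm_conj, div_self (norm_ne_zero_iff.2 ha), one_mul,
      norm_multiset_prod, Multiset.map_map]
    exact Multiset.prod_eq_one fun x hx => by
      obtain ⟨r, hr, rfl⟩ := Multiset.mem_map.1 hx
      simpa using hcirc r hr
  have hfactor : ∀ r ∈ h.roots, 1 - C (conj r) * X = C (-conj r) * (X - C r) := fun r hr => by
    have hr : C (conj r) * C r = 1 := by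
      rw [← C_mul, conj_mul', hcirc r hr, ofReal_one, one_pow, C_1]
    rw [C_neg]
    linear_combination -hr
  have hconj : C (conj a) = C (conj a / a) * C a := by rw [← C_mul, div_mul_cancel₀ _ ha]
  calc conjReciprocal n h
      = C (conj a) * (h.roots.map fun r => C (-conj r) * (X - C r)).prod := by
        rw [conjReciprocal_eq_C_mul_prod hdeg, Multiset.map_congr rfl hfactor]
    _ = C (conj a / a * (h.roots.map fun r => -conj r).prod) *
          (C a * (h.roots.map fun r => X - C r).prod) := by
        rw [Multiset.prod_map_mul, C_mul, map_multiset_prod C, Multiset.map_map,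
          Function.comp_def, hconj]
        ring
    _ = C _ * h := by rw [← (IsAlgClosed.splits h).eq_prod_roots]

theorem norm_eq_one_of_eval_X_pow_add_C_mul_eq_zero {k : ℕ} {c z : ℂ} (hc : ‖c‖ = 1)
    (hcirc : ∀ r ∈ h.roots, ‖r‖ = 1) (hne : (X ^ k + C c) * h ≠ 0)
    (hz : ((X ^ k + C c) * h).eval z = 0) : ‖z‖ = 1 := by
  rw [eval_mul, mul_eq_zero] at hz
  rcases hz with hz | hz
  · rcases eq_or_ne k 0 with rfl | hk
    · refine absurd ?_ hne
      rw [eval_add, eval_pow, eval_X, eval_C, pow_zero] at hz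
      rw [pow_zero, ← C_1, ← C_add, hz, C_0, zero_mul]
    · rw [← pow_eq_one_iff_of_nonneg (norm_nonneg z) hk, ← norm_pow, ← hc, ← norm_neg c]
      simp only [eval_add, eval_pow, eval_X, eval_C] at hz
      rw [eq_neg_of_add_eq_zero_left hz]
  · exact hcirc z ((mem_roots (right_ne_zero_of_mul hne)).2 hz)

end

theorem selfInversive_zeros_on_unit_circle_general (n d : ℕ) (h : Polynomial ℂ)
    (hdeg : h.natDegree = n) (hzeros : ∀ z : ℂ, h.eval z = 0 → ‖z‖ ≤ 1)
    (lam : ℂ) (hlam : ‖lam‖ = 1)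
    (P : Polynomial ℂ) (hP : P = X ^ (d - n) * h + Polynomial.C lam * conjReciprocal n h)
    (hP0 : P ≠ 0) :
    ∀ z : ℂ, P.eval z = 0 → ‖z‖ = 1 := by
  intro z hz
  have hh : h ≠ 0 := by rintro rfl; simp [hP, conjReciprocal] at hP0
  have hroots : ∀ r ∈ h.roots, ‖r‖ ≤ 1 := fun r hr => hzeros r (isRoot_of_mem_roots hr)
  by_cases hcirc : ∀ r ∈ h.roots, ‖r‖ = 1
  · obtain ⟨μ, hμ, hrec⟩ := exists_conjReciprocal_eq_C_mul_self hdeg hh hcirc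
    have hfac : P = (X ^ (d - n) + C (lam * μ)) * h := by rw [hP, hrec, C_mul]; ring
    rw [hfac] at hz hP0
    exact norm_eq_one_of_eval_X_pow_add_C_mul_eq_zero (by rw [norm_mul, hlam, hμ, one_mul])
      hcirc hP0 hz
  · push Not at hcirc
    obtain ⟨r₀, hr₀, hr₀_ne⟩ := hcirc
    refine norm_eq_one_of_norm_pow_mul_norm_eval_eq hdeg hroots
      ⟨r₀, hr₀, (hroots r₀ hr₀).lt_of_ne hr₀_ne⟩ (k := d - n) ?_
    have hPz : z ^ (d - n) * h.eval z = -(lam * (conjReciprocal n h).eval z) := by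
      rw [hP, eval_add, eval_mul, eval_mul, eval_pow, eval_X, eval_C] at hz
      exact eq_neg_of_add_eq_zero_left hz
    rw [← norm_pow, ← norm_mul, hPz, norm_neg, norm_mul, hlam, one_mul]

/-- If all zeros of `h`, of degree `n`, lie in the closed unit disk, then for any `d ≥ n`
and unimodular `λ`, the polynomial `z^(d-n) h(z) + λ · (z^n conj(h)(1/z))` has all its
zeros on the unit circle, provided it is not identically zero. -/
theorem selfInversive_zeros_on_unit_circle (n d : ℕ) (h : Polynomial ℂ)
    (hdeg : h.natDegree = n) (hzeros : ∀ z : ℂ, h.eval z = 0 → ‖z‖ ≤ 1)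
    (hd : n ≤ d) (lam : ℂ) (hlam : ‖lam‖ = 1)
    (P : Polynomial ℂ) (hP : P = X ^ (d - n) * h + Polynomial.C lam * conjReciprocal n h)
    (hP0 : P ≠ 0) :
    ∀ z : ℂ, P.eval z = 0 → ‖z‖ = 1 :=
  selfInversive_zeros_on_unit_circle_general n d h hdeg hzeros lam hlam P hP hP0
end

section
/- Let P(z) = Σ_{j=0}^{n} a_j z^j be a polynomial with real coefficients satisfying 0 < a_0 ≤ a_1 ≤ ⋯ ≤ a_n. Then every complex zero z of P satisfies |z| ≤ 1. (Eneström–Kakeya theorem.) -/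
/-!
Multiplying by `z - 1` and summing by parts gives
`(z - 1) P(z) = a_n z^{n+1} - (a_0 + ∑_{j<n} (a_{j+1} - a_j) z^{j+1})`.
The coefficients `a_0` and `a_{j+1} - a_j` are nonnegative and telescope to `a_n`, so for `|z| > 1`
the subtracted sum has modulus at most `a_n |z|^n < a_n |z|^{n+1}`; hence `P(z) ≠ 0`.
-/

open Polynomial Finset

theorem sub_one_mul_sum_range_mul_pow {R : Type*} [CommRing R] (a : ℕ → R) (z : R) (n : ℕ) :
    (z - 1) * ∑ j ∈ range (n + 1), a j * z ^ j =
      a n * z ^ (n + 1) - (a 0 + ∑ j ∈ range n, (a (j + 1) - a j) * z ^ (j + 1)) := by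
  induction n with
  | zero => rw [sum_range_one, sum_range_zero]; ring
  | succ n ih =>
    rw [sum_range_succ, mul_add, ih, sum_range_succ]
    ring

section MonotoneCoefficients

variable {a : ℕ → ℝ} {n : ℕ}

theorem add_sum_range_sub_mul_pow_le (ha0 : 0 ≤ a 0) (hmono : ∀ j < n, a j ≤ a (j + 1))
    {r : ℝ} (hr : 1 ≤ r) :
    a 0 + ∑ j ∈ range n, (a (j + 1) - a j) * r ^ (j + 1) ≤ a n * r ^ n := by
  have hsum : ∑ j ∈ range n, (a (j + 1) - a j) * r ^ (j + 1)
      ≤ ∑ j ∈ range n, (a (j + 1) - a j) * r ^ n := by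
    gcongr with j hj
    · exact sub_nonneg.mpr (hmono j (mem_range.mp hj))
    · exact mem_range.mp hj
  calc a 0 + ∑ j ∈ range n, (a (j + 1) - a j) * r ^ (j + 1)
      ≤ a 0 * r ^ n + ∑ j ∈ range n, (a (j + 1) - a j) * r ^ n := by
        gcongr
        exact le_mul_of_one_le_right ha0 (one_le_pow₀ hr)
    _ = a n * r ^ n := by
        rw [← sum_mul, sum_range_sub a]
        ring

theorem norm_add_sum_range_sub_mul_pow_le (ha0 : 0 ≤ a 0) (hmono : ∀ j < n, a j ≤ a (j + 1))
    {z : ℂ} (hz : 1 ≤ ‖z‖) :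
    ‖(a 0 : ℂ) + ∑ j ∈ range n, ((a (j + 1) - a j : ℝ) : ℂ) * z ^ (j + 1)‖ ≤ a n * ‖z‖ ^ n := by
  calc ‖(a 0 : ℂ) + ∑ j ∈ range n, ((a (j + 1) - a j : ℝ) : ℂ) * z ^ (j + 1)‖
      ≤ ‖(a 0 : ℂ)‖ + ∑ j ∈ range n, ‖((a (j + 1) - a j : ℝ) : ℂ) * z ^ (j + 1)‖ :=
        (norm_add_le _ _).trans (add_le_add_right (norm_sum_le _ _) _)
    _ = a 0 + ∑ j ∈ range n, (a (j + 1) - a j) * ‖z‖ ^ (j + 1) := by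
        congr 1
        · simp [abs_of_nonneg ha0]
        · refine sum_congr rfl fun j hj => ?_
          rw [norm_mul, norm_pow, Complex.norm_real, Real.norm_of_nonneg
            (sub_nonneg.mpr (hmono j (mem_range.mp hj)))]
    _ ≤ a n * ‖z‖ ^ n := add_sum_range_sub_mul_pow_le ha0 hmono hz

end MonotoneCoefficients

/-- Eneström–Kakeya theorem: if `P(z) = ∑_{j=0}^{n} a_j z^j` has real coefficients with
`0 < a_0 ≤ a_1 ≤ ⋯ ≤ a_n`, then every complex zero of `P` lies in the closed unit disk. -/
theorem enestrom_kakeya (n : ℕ) (a : ℕ → ℝ) (ha0 : 0 < a 0)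
    (hmono : ∀ i j, i ≤ j → j ≤ n → a i ≤ a j)
    (P : Polynomial ℂ)
    (hP : P = ∑ j ∈ Finset.range (n + 1), Polynomial.C ((a j : ℂ)) * X ^ j) :
    ∀ z : ℂ, P.eval z = 0 → ‖z‖ ≤ 1 := by
  intro z hz
  by_contra! hz1
  have han : 0 < a n := ha0.trans_le (hmono 0 n n.zero_le le_rfl)
  have hstep : ∀ j < n, a j ≤ a (j + 1) := fun j hj => hmono j (j + 1) j.le_succ hj
  have hroot : ∑ j ∈ range (n + 1), (a j : ℂ) * z ^ j = 0 := by
    simpa [hP, eval_finsetSum] using hz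
  have hlead : (a n : ℂ) * z ^ (n + 1) =
      a 0 + ∑ j ∈ range n, ((a (j + 1) - a j : ℝ) : ℂ) * z ^ (j + 1) := by
    have := sub_one_mul_sum_range_mul_pow (fun j => (a j : ℂ)) z n
    push_cast at this ⊢
    linear_combination (z - 1) * hroot - this
  have hle : a n * ‖z‖ ^ (n + 1) ≤ a n * ‖z‖ ^ n := by
    have := norm_add_sum_range_sub_mul_pow_le ha0.le hstep hz1.le
    rwa [← hlead, norm_mul, norm_pow, Complex.norm_real, Real.norm_of_nonneg han.le] at this
  have hlt : a n * ‖z‖ ^ n < a n * ‖z‖ ^ (n + 1) :=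
    mul_lt_mul_of_pos_left (pow_lt_pow_right₀ hz1 n.lt_succ_self) han
  exact hle.not_gt hlt
end

section
/- Let f be a continuous function on the positive imaginary axis with f(iv) = O(e^{-cv}) as v → ∞ for some c > 0, and suppose f satisfies f(-1/τ) = τ^k f(τ) for τ = iv, v > 0, with k an even positive integer. Define Λ_f(s) = ∫_0^∞ f(iv) v^{s-1} dv. Then Λ_f(s) converges for all s ∈ ℂ and satisfies the functional equation Λ_f(s) = i^k Λ_f(k − s). -/
open Complex MeasureTheory Set Filter Topology Asymptotics

/-!
Along the imaginary axis the modular relation reads `g (1/t) = (i^k t^k) g t` for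
`g t = f (i t)`, so `g` and itself form a functional-equation pair of weight `k` and root
number `i^k` in the sense of `WeakFEPair`. Exponential decay at `∞` gives decay faster than
any power there, and the relation transfers it to `0`; Mathlib's Mellin-transform theory of
such pairs then yields entire convergence and the functional equation.
-/

lemma isBigO_rpow_atTop_of_norm_le_exp {E : Type*} [NormedAddCommGroup E] {g : ℝ → E}
    {c C : ℝ} (hc : 0 < c) (hg : ∀ v : ℝ, 1 ≤ v → ‖g v‖ ≤ C * Real.exp (-c * v)) (r : ℝ) :
    g =O[atTop] (· ^ r) := by
  have hexp : g =O[atTop] fun v => Real.exp (-c * v) :=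
    IsBigO.of_bound C <| by
      filter_upwards [eventually_ge_atTop 1] with v hv
      rw [Real.norm_of_nonneg (Real.exp_pos _).le]
      exact hg v hv
  exact hexp.trans (isLittleO_exp_neg_mul_rpow_atTop hc r).isBigO

lemma ofReal_one_div_mul_I {x : ℝ} (hx : x ≠ 0) : ((1 / x : ℝ) : ℂ) * I = -1 / (x * I) := by
  have hx' : (x : ℂ) ≠ 0 := ofReal_ne_zero.2 hx
  push_cast
  field_simp
  rw [I_sq]

lemma apply_one_div_mul_I_eq {f : ℂ → ℂ} {k : ℕ}
    (hmod : ∀ v : ℝ, 0 < v → f (-1 / (v * I)) = (v * I) ^ k * f (v * I)) {x : ℝ} (hx : 0 < x) :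
    f ((1 / x : ℝ) * I) = (I ^ k * ((x ^ (k : ℝ) : ℝ) : ℂ)) • f (x * I) := by
  rw [ofReal_one_div_mul_I hx.ne', hmod x hx, Real.rpow_natCast, smul_eq_mul, mul_pow]
  push_cast
  ring

noncomputable def imagAxisFEPair (f : ℂ → ℂ) (k : ℕ) (hk : 0 < k)
    (hcont : ContinuousOn (fun v : ℝ => f (v * I)) (Ioi 0))
    (hdecay : ∀ r : ℝ, (fun v : ℝ => f (v * I)) =O[atTop] (· ^ r))
    (hmod : ∀ v : ℝ, 0 < v → f (-1 / (v * I)) = (v * I) ^ k * f (v * I)) : WeakFEPair ℂ where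
  f v := f (v * I)
  g v := f (v * I)
  k := k
  ε := I ^ k
  f₀ := 0
  g₀ := 0
  hf_int := hcont.locallyIntegrableOn measurableSet_Ioi
  hg_int := hcont.locallyIntegrableOn measurableSet_Ioi
  hk := Nat.cast_pos.2 hk
  hε := pow_ne_zero k I_ne_zero
  h_feq _ hx := apply_one_div_mul_I_eq hmod hx
  hf_top r := by simpa using hdecay r
  hg_top r := by simpa using hdecay r

theorem mellin_functional_equation_general (f : ℂ → ℂ) (k : ℕ) (hk : 0 < k)
    (hcont : ContinuousOn (fun v : ℝ => f (v * I)) (Ioi 0))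
    (hdecay : ∃ c > (0:ℝ), ∃ C : ℝ, ∀ v : ℝ, 1 ≤ v → ‖f (v * I)‖ ≤ C * Real.exp (-c * v))
    (hmod : ∀ v : ℝ, 0 < v → f (-1 / (v * I)) = (v * I) ^ k * f (v * I)) :
    (∀ s : ℂ, IntegrableOn (fun v : ℝ => f (v * I) * (v : ℂ) ^ (s - 1)) (Ioi 0)) ∧
    (∀ s : ℂ,
      ∫ v in Ioi (0:ℝ), f (v * I) * (v : ℂ) ^ (s - 1) =
        I ^ k * ∫ v in Ioi (0:ℝ), f (v * I) * (v : ℂ) ^ ((k : ℂ) - s - 1)) := by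
  obtain ⟨c, hc, C, hC⟩ := hdecay
  set P := imagAxisFEPair f k hk hcont (isBigO_rpow_atTop_of_norm_le_exp hc hC) hmod
  have hP : IsStrongFEPair P := ⟨rfl, rfl⟩
  have hintegrand (s : ℂ) : (fun v : ℝ => f (v * I) * (v : ℂ) ^ (s - 1)) =
      fun v : ℝ => (v : ℂ) ^ (s - 1) • P.f v :=
    funext fun _ => mul_comm _ _
  refine ⟨fun s => hintegrand s ▸ (hP.hasMellin s).1, fun s => ?_⟩
  have hfeq := P.functional_equation (k - s)
  rw [show (P.k : ℂ) = k from ofReal_natCast k, sub_sub_cancel, hP.Λ_eq, hP.symm_Λ_eq] at hfeq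
  rw [hintegrand, hintegrand]
  exact hfeq

/-- For a cusp-form-like function `f` (continuous on the positive imaginary axis, with
exponential decay at `i∞` and satisfying `f(-1/τ) = τ^k f(τ)` on the imaginary axis),
the Mellin transform `Λ_f(s) = ∫_0^∞ f(iv) v^{s-1} dv` converges for every `s ∈ ℂ` and
satisfies `Λ_f(s) = i^k Λ_f(k-s)`. -/
theorem mellin_functional_equation (f : ℂ → ℂ) (k : ℕ) (hk : 0 < k) (hke : Even k)
    (hcont : ContinuousOn (fun v : ℝ => f (v * I)) (Ioi 0))
    (hdecay : ∃ c > (0:ℝ), ∃ C : ℝ, ∀ v : ℝ, 1 ≤ v → ‖f (v * I)‖ ≤ C * Real.exp (-c * v))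
    (hmod : ∀ v : ℝ, 0 < v → f (-1 / (v * I)) = (v * I) ^ k * f (v * I)) :
    (∀ s : ℂ, IntegrableOn (fun v : ℝ => f (v * I) * (v : ℂ) ^ (s - 1)) (Ioi 0)) ∧
    (∀ s : ℂ,
      ∫ v in Ioi (0:ℝ), f (v * I) * (v : ℂ) ^ (s - 1) =
        I ^ k * ∫ v in Ioi (0:ℝ), f (v * I) * (v : ℂ) ^ ((k : ℂ) - s - 1)) :=
  mellin_functional_equation_general f k hk hcont hdecay hmod
end

section
/- Let f(τ) = Σ_{n=0}^∞ a_n e^{2πinτ} be a modular form of even weight k for SL₂(ℤ), and Λ_f(s) = (2π)^{-s} Γ(s) L_f(s) its completed L-function, where L_f(s) = Σ_{n≥1} a_n n^{-s}. Then for Re(s) in a vertical strip where both sides are defined, Λ_f(s) = ∫_1^∞ (f(iv) − a_0) v^{s-1} dv + i^k ∫_1^∞ (f(iv) − a_0) v^{k-s-1} dv − a_0/s − a_0 i^k/(k − s). -/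
/-!
Put `F t = f (t * I)`. The transformation law gives `F (1 / t) = i ^ k t ^ k F t` and `F - a₀`
decays exponentially at `∞`, so `(F, F)` is a weak FE-pair with root number `i ^ k` and constant
terms `a₀`. For `re s > k` the Mellin transform of `F - a₀` is therefore `Λ₀ s - a₀ / s -
i ^ k a₀ / (k - s)`, where `Λ₀` is the Mellin transform of the modified function of the pair;
splitting `Λ₀` at `1` and substituting `t ↦ 1 / t` on `(0, 1)` yields the two integrals over
`(1, ∞)`. On the other hand, integrating `F t - a₀ = ∑ aₙ e^{-2πnt}` termwise against `t ^ (s - 1)`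
gives `(2π) ^ (-s) Γ(s) L_f(s)`.
-/

open Complex MeasureTheory Set Real Filter Asymptotics
open scoped Topology

section Mellin

variable {E : Type*} [NormedAddCommGroup E] [NormedSpace ℂ E]

lemma mellin_indicator {S : Set ℝ} (hS : MeasurableSet S) (hS0 : S ⊆ Ioi 0) (F : ℝ → E)
    (s : ℂ) : mellin (S.indicator F) s = ∫ t in S, (t : ℂ) ^ (s - 1) • F t := by
  rw [mellin]
  simp_rw [← indicator_smul]
  rw [setIntegral_indicator hS, inter_eq_self_of_subset_right hS0]

lemma setIntegral_Ioc_zero_one_cpow_smul_eq_setIntegral_Ioi_comp_inv (F : ℝ → E) (s : ℂ) :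
    ∫ t in Ioc (0 : ℝ) 1, (t : ℂ) ^ (s - 1) • F t =
      ∫ t in Ioi (1 : ℝ), (t : ℂ) ^ (-s - 1) • F t⁻¹ := by
  have hcomp : EqOn ((Ioc 0 1).indicator F) (fun t ↦ (Ici 1).indicator (fun u ↦ F u⁻¹) t⁻¹)
      (Ioi 0) := by
    intro t (ht : 0 < t)
    by_cases h : t ≤ 1
    · simp [indicator_of_mem, ht, h, (one_le_inv₀ ht).mpr h]
    · simp [indicator_of_notMem, h, (inv_lt_one₀ ht).mpr (not_le.mp h)]
  rw [← mellin_indicator measurableSet_Ioc Ioc_subset_Ioi_self, ← integral_Ici_eq_integral_Ioi,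
    ← mellin_indicator measurableSet_Ici (fun t (ht : 1 ≤ t) ↦ one_pos.trans_le ht),
    ← mellin_comp_inv, mellin, mellin, setIntegral_congr_fun measurableSet_Ioi
      (fun t ht ↦ congrArg _ (hcomp ht))]

end Mellin

namespace WeakFEPair

variable {E : Type*} [NormedAddCommGroup E] [NormedSpace ℂ E] (P : WeakFEPair E)

lemma mellin_eq_setIntegral_Ioi_add {s : ℂ} (hs : MellinConvergent P.f s) :
    mellin P.f s = (∫ t in Ioi (1 : ℝ), (t : ℂ) ^ (s - 1) • P.f t) +
      P.ε • ∫ t in Ioi (1 : ℝ), (t : ℂ) ^ (P.k - s - 1) • P.g t := by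
  have hfeq : EqOn (fun t : ℝ ↦ (t : ℂ) ^ (-s - 1) • P.f t⁻¹)
      (fun t ↦ P.ε • (t : ℂ) ^ (P.k - s - 1) • P.g t) (Ioi 1) := by
    intro t (ht : 1 < t)
    have ht0 : 0 < t := one_pos.trans ht
    dsimp only
    rw [← one_div, P.h_feq t ht0, ofReal_cpow ht0.le, smul_smul, smul_smul,
      mul_left_comm, ← cpow_add _ _ (ofReal_ne_zero.mpr ht0.ne')]
    ring_nf
  rw [mellin, ← Ioc_union_Ioi_eq_Ioi zero_le_one,
    setIntegral_union (Ioc_disjoint_Ioi le_rfl) measurableSet_Ioi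
      (hs.mono_set Ioc_subset_Ioi_self) (hs.mono_set (Ioi_subset_Ioi zero_le_one)),
    setIntegral_Ioc_zero_one_cpow_smul_eq_setIntegral_Ioi_comp_inv,
    setIntegral_congr_fun measurableSet_Ioi hfeq, integral_smul, add_comm]

lemma Λ₀_eq_setIntegral_Ioi_add [CompleteSpace E] (s : ℂ) :
    P.Λ₀ s = (∫ t in Ioi (1 : ℝ), (t : ℂ) ^ (s - 1) • (P.f t - P.f₀)) +
      P.ε • ∫ t in Ioi (1 : ℝ), (t : ℂ) ^ (P.k - s - 1) • (P.g t - P.g₀) := by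
  have hmodif {Q : WeakFEPair E} : EqOn Q.f_modif (fun t ↦ Q.f t - Q.f₀) (Ioi 1) :=
    fun t (ht : 1 < t) ↦ by simp [f_modif, ht, notMem_Ioo_of_ge ht.le]
  rw [Λ₀, show P.f_modif = P.toStrongFEPair.f from rfl,
    P.toStrongFEPair.mellin_eq_setIntegral_Ioi_add (P.isStrongFEPair_toStrongFEPair.hasMellin s).1]
  exact congrArg₂ _ (setIntegral_congr_fun measurableSet_Ioi fun t ht ↦ congrArg _ (hmodif ht))
    (congrArg _ (setIntegral_congr_fun measurableSet_Ioi fun t ht ↦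
      congrArg _ (hmodif (Q := P.symm) ht)))

end WeakFEPair

lemma continuousOn_tsum_mul_exp_neg {ι : Type*} {b : ι → ℂ} {p : ι → ℝ} (hp : ∀ i, 0 ≤ p i)
    (hb : ∀ t > 0, Summable fun i ↦ ‖b i‖ * rexp (-p i * t)) :
    ContinuousOn (fun t : ℝ ↦ ∑' i, b i * rexp (-p i * t)) (Ioi 0) := by
  refine continuousOn_of_forall_continuousAt fun t₀ (ht₀ : 0 < t₀) ↦ ?_
  have hcont : ContinuousOn (fun t : ℝ ↦ ∑' i, b i * rexp (-p i * t)) (Ioi (t₀ / 2)) := by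
    refine continuousOn_tsum (fun i ↦ by fun_prop) (hb _ (half_pos ht₀)) fun i t ht ↦ ?_
    rw [norm_mul, norm_real, norm_of_nonneg (exp_pos _).le]
    gcongr ‖b i‖ * rexp ?_
    exact mul_le_mul_of_nonpos_left (le_of_lt ht) (neg_nonpos.mpr (hp i))
  exact hcont.continuousAt (Ioi_mem_nhds (half_lt_self ht₀))

section QSeries

variable {a : ℕ → ℂ}

lemma summable_norm_mul_rpow_neg_of_summable {σ : ℝ}
    (h : Summable fun n : ℕ ↦ a (n + 1) * ((n + 1 : ℕ) : ℂ) ^ (-(σ : ℂ))) :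
    Summable fun n : ℕ ↦ ‖a (n + 1)‖ * ((n : ℝ) + 1) ^ (-σ) :=
  h.norm.congr fun n ↦ by rw [norm_mul, norm_natCast_cpow_of_pos n.succ_pos]; push_cast; simp

lemma summable_norm_mul_exp_neg {σ : ℝ}
    (h : Summable fun n : ℕ ↦ ‖a (n + 1)‖ * ((n : ℝ) + 1) ^ (-σ)) {t : ℝ} (ht : 0 < t) :
    Summable fun n : ℕ ↦ ‖a (n + 1)‖ * rexp (-(2 * π * ((n : ℝ) + 1)) * t) := by
  have hlim : Tendsto (fun n : ℕ ↦ ((n : ℝ) + 1) ^ σ * rexp (-(2 * π * t) * ((n : ℝ) + 1)))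
      atTop (𝓝 0) :=
    (tendsto_rpow_mul_exp_neg_mul_atTop_nhds_zero σ _ (by positivity)).comp
      (tendsto_atTop_add_const_right _ 1 tendsto_natCast_atTop_atTop)
  refine summable_of_isBigO_nat h
    (((isBigO_refl _ _).mul (hlim.isBigO_one ℝ)).congr (fun n ↦ ?_) fun n ↦ mul_one _)
  have hn : (0 : ℝ) < n + 1 := n.cast_add_one_pos
  rw [mul_assoc, ← mul_assoc (_ ^ (-σ)), ← rpow_add hn, neg_add_cancel, rpow_zero, one_mul]
  ring_nf

variable {f : ℂ → ℂ}

lemma hasSum_imagAxis_sub_const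
    (hf : ∀ τ : ℂ, 0 < τ.im → f τ = ∑' n : ℕ, a n * cexp (2 * π * I * n * τ))
    (ha : ∀ t > 0, Summable fun n : ℕ ↦ ‖a (n + 1)‖ * rexp (-(2 * π * ((n : ℝ) + 1)) * t))
    {t : ℝ} (ht : 0 < t) :
    HasSum (fun n : ℕ ↦ a (n + 1) * rexp (-(2 * π * ((n : ℝ) + 1)) * t)) (f (t * I) - a 0) := by
  have hexp (n : ℕ) : cexp (2 * π * I * n * (t * I)) = rexp (-(2 * π * n) * t) := by
    push_cast
    ring_nf
    rw [I_sq]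
    ring_nf
  have hsum : Summable fun n : ℕ ↦ a n * rexp (-(2 * π * n) * t) := by
    refine (summable_nat_add_iff 1).mp (Summable.of_norm ((ha t ht).congr fun n ↦ ?_))
    rw [norm_mul, norm_real, norm_of_nonneg (exp_pos _).le]
    push_cast
    ring_nf
  have hfull : HasSum (fun n : ℕ ↦ a n * rexp (-(2 * π * n) * t)) (f (t * I)) := by
    rw [hf _ (by simpa using ht)]
    simp_rw [hexp]
    exact hsum.hasSum
  simpa using (hasSum_nat_add_iff' 1).mpr hfull

lemma continuousOn_imagAxis
    (hf : ∀ τ : ℂ, 0 < τ.im → f τ = ∑' n : ℕ, a n * cexp (2 * π * I * n * τ))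
    (ha : ∀ t > 0, Summable fun n : ℕ ↦ ‖a (n + 1)‖ * rexp (-(2 * π * ((n : ℝ) + 1)) * t)) :
    ContinuousOn (fun t : ℝ ↦ f (t * I)) (Ioi 0) := by
  refine ((continuousOn_tsum_mul_exp_neg (fun n ↦ by positivity) ha).add
    (continuousOn_const (c := a 0))).congr fun t (ht : 0 < t) ↦ ?_
  simp only [Pi.add_apply, (hasSum_imagAxis_sub_const hf ha ht).tsum_eq, sub_add_cancel]

end QSeries

lemma mellin_eq_completedLSeries {a : ℕ → ℂ} {F : ℝ → ℂ} {s : ℂ} (hs : 0 < s.re)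
    (hF : ∀ t ∈ Ioi 0,
      HasSum (fun n : ℕ ↦ a (n + 1) * rexp (-(2 * π * ((n : ℝ) + 1)) * t)) (F t))
    (ha : Summable fun n : ℕ ↦ ‖a (n + 1)‖ * ((n : ℝ) + 1) ^ (-s.re)) :
    mellin F s =
      (2 * π : ℂ) ^ (-s) * Gamma s * ∑' n : ℕ, a (n + 1) * ((n + 1 : ℕ) : ℂ) ^ (-s) := by
  have h_sum : Summable fun n : ℕ ↦ ‖a (n + 1)‖ / (2 * π * ((n : ℝ) + 1)) ^ s.re := by
    refine (ha.mul_left ((2 * π) ^ (-s.re))).congr fun n ↦ ?_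
    rw [mul_rpow (x := 2 * π) (by positivity) (by positivity), rpow_neg (by positivity),
      rpow_neg (by positivity)]
    ring
  rw [← (hasSum_mellin (fun n ↦ Or.inr (by positivity)) hs hF h_sum).tsum_eq, ← tsum_mul_left]
  refine tsum_congr fun n ↦ ?_
  rw [ofReal_mul, mul_cpow_ofReal_nonneg (by positivity) (by positivity), cpow_neg, cpow_neg]
  push_cast
  ring

lemma isBigO_rpow_of_exp_decay {E : Type*} [NormedAddCommGroup E] {F : ℝ → E} {c C : ℝ}
    (hc : 0 < c) (hF : ∀ v : ℝ, 1 ≤ v → ‖F v‖ ≤ C * rexp (-c * v)) (r : ℝ) :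
    F =O[atTop] (· ^ r) := by
  refine IsBigO.trans ?_ (isLittleO_exp_neg_mul_rpow_atTop hc r).isBigO
  refine IsBigO.of_bound C ?_
  filter_upwards [eventually_ge_atTop 1] with v hv
  rw [norm_of_nonneg (exp_pos _).le]
  exact hF v hv

lemma imagAxis_one_div_eq {f : ℂ → ℂ} {k : ℕ}
    (hmod : ∀ τ : ℂ, 0 < τ.im → f (-1 / τ) = τ ^ k * f τ) {x : ℝ} (hx : 0 < x) :
    f (↑(1 / x) * I) = (I ^ k * ↑(x ^ (k : ℝ))) • f (x * I) := by
  have hinv : -1 / ((x : ℂ) * I) = ↑(1 / x) * I := by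
    rw [div_eq_iff (by simp [hx.ne'])]
    push_cast
    rw [mul_mul_mul_comm, one_div_mul_cancel (ofReal_ne_zero.mpr hx.ne'), I_mul_I, one_mul]
  rw [← hinv, hmod _ (by simpa using hx), smul_eq_mul, rpow_natCast, mul_pow]
  push_cast
  ring

def imagAxisWeakFEPair (k : ℕ) (hk : 0 < k) (f : ℂ → ℂ) (a₀ : ℂ)
    (hcont : ContinuousOn (fun t : ℝ ↦ f (t * I)) (Ioi 0))
    (hmod : ∀ τ : ℂ, 0 < τ.im → f (-1 / τ) = τ ^ k * f τ)
    (hdecay : ∃ c > (0 : ℝ), ∃ C : ℝ, ∀ v : ℝ, 1 ≤ v → ‖f (v * I) - a₀‖ ≤ C * rexp (-c * v)) :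
    WeakFEPair ℂ where
  f t := f (t * I)
  g t := f (t * I)
  k := k
  ε := I ^ k
  f₀ := a₀
  g₀ := a₀
  hf_int := hcont.locallyIntegrableOn measurableSet_Ioi
  hg_int := hcont.locallyIntegrableOn measurableSet_Ioi
  hk := mod_cast hk
  hε := pow_ne_zero _ I_ne_zero
  h_feq _ hx := imagAxis_one_div_eq hmod hx
  hf_top r := by
    obtain ⟨c, hc, C, hC⟩ := hdecay
    exact isBigO_rpow_of_exp_decay hc hC r
  hg_top r := by
    obtain ⟨c, hc, C, hC⟩ := hdecay
    exact isBigO_rpow_of_exp_decay hc hC r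

theorem completed_L_integral_expression_general (k : ℕ) (hk : 0 < k)
    (f : ℂ → ℂ) (a : ℕ → ℂ)
    (hf : ∀ τ : ℂ, 0 < τ.im → f τ = ∑' n : ℕ, a n * Complex.exp (2 * π * I * n * τ))
    (hmod : ∀ τ : ℂ, 0 < τ.im → f (-1 / τ) = τ ^ k * f τ)
    (hdecay : ∃ c > (0:ℝ), ∃ C : ℝ, ∀ v : ℝ, 1 ≤ v →
      ‖f (v * I) - a 0‖ ≤ C * Real.exp (-c * v))
    (hsum : ∀ s : ℂ, (k : ℝ) < s.re →
      Summable (fun n : ℕ => a (n + 1) * ((n + 1 : ℕ) : ℂ) ^ (-s))) :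
    ∀ s : ℂ, (k : ℝ) < s.re →
      ((2 * π : ℂ) ^ (-s)) * Complex.Gamma s *
          (∑' n : ℕ, a (n + 1) * ((n + 1 : ℕ) : ℂ) ^ (-s)) =
        (∫ v in Ioi (1:ℝ), (f (v * I) - a 0) * (v : ℂ) ^ (s - 1)) +
        I ^ k * (∫ v in Ioi (1:ℝ), (f (v * I) - a 0) * (v : ℂ) ^ ((k : ℂ) - s - 1)) -
        a 0 / s - a 0 * I ^ k / ((k : ℂ) - s) := by
  intro s hs
  have ha : Summable fun n : ℕ ↦ ‖a (n + 1)‖ * ((n : ℝ) + 1) ^ (-s.re) :=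
    summable_norm_mul_rpow_neg_of_summable (hsum s.re (by simpa using hs))
  have hq (t : ℝ) (ht : 0 < t) := summable_norm_mul_exp_neg ha ht
  set P := imagAxisWeakFEPair k hk f (a 0) (continuousOn_imagAxis hf hq) hmod hdecay
  have hmellin : mellin (fun t : ℝ ↦ f (t * I) - a 0) s = P.Λ s := (P.hasMellin hs).2
  rw [← mellin_eq_completedLSeries ((Nat.cast_nonneg k).trans_lt hs)
    (fun t ht ↦ hasSum_imagAxis_sub_const hf hq ht) ha, hmellin, WeakFEPair.Λ,
    P.Λ₀_eq_setIntegral_Ioi_add]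
  simp only [P, imagAxisWeakFEPair, smul_eq_mul, ofReal_natCast,
    mul_comm ((_ : ℂ) ^ (_ : ℂ)) (f _ - a 0)]
  ring

/-- For a modular form `f(τ) = ∑_{n≥0} a_n e^{2πinτ}` of even weight `k` for `SL₂(ℤ)`, the
completed `L`-function `Λ_f(s) = (2π)^{-s} Γ(s) ∑_{n≥1} a_n n^{-s}` has the integral
expression
`Λ_f(s) = ∫_1^∞ (f(iv)-a₀)v^{s-1}dv + i^k ∫_1^∞ (f(iv)-a₀)v^{k-s-1}dv - a₀/s - a₀i^k/(k-s)`
on a vertical strip where both sides are defined. -/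
theorem completed_L_integral_expression (k : ℕ) (hk : 0 < k) (hke : Even k)
    (f : ℂ → ℂ) (a : ℕ → ℂ)
    (hf : ∀ τ : ℂ, 0 < τ.im → f τ = ∑' n : ℕ, a n * Complex.exp (2 * π * I * n * τ))
    (hmod : ∀ τ : ℂ, 0 < τ.im → f (-1 / τ) = τ ^ k * f τ)
    (hdecay : ∃ c > (0:ℝ), ∃ C : ℝ, ∀ v : ℝ, 1 ≤ v →
      ‖f (v * I) - a 0‖ ≤ C * Real.exp (-c * v))
    (hsum : ∀ s : ℂ, (k : ℝ) < s.re →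
      Summable (fun n : ℕ => a (n + 1) * ((n + 1 : ℕ) : ℂ) ^ (-s))) :
    ∀ s : ℂ, (k : ℝ) < s.re →
      ((2 * π : ℂ) ^ (-s)) * Complex.Gamma s *
          (∑' n : ℕ, a (n + 1) * ((n + 1 : ℕ) : ℂ) ^ (-s)) =
        (∫ v in Ioi (1:ℝ), (f (v * I) - a 0) * (v : ℂ) ^ (s - 1)) +
        I ^ k * (∫ v in Ioi (1:ℝ), (f (v * I) - a 0) * (v : ℂ) ^ ((k : ℂ) - s - 1)) -
        a 0 / s - a 0 * I ^ k / ((k : ℂ) - s) :=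
  completed_L_integral_expression_general k hk f a hf hmod hdecay hsum
end
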